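/- arXiv:1804.05433 — 5 statements merged into one kernel-verified Lean document; each statement's English description precedes it below -/
import Mathlib

section
/- Let A, B, δ be nonnegative real numbers satisfying |A² − B²| ≤ δ(1 + B)(δ + A). Then max(A, 1) ≤ (1 + 4δ) · max(B, 1). -/
/-!
Write `M = max B 1`. Since `B ≤ M` and `1 + B ≤ 2M`, the hypothesis gives the quadratic inequality
`A² ≤ 2δM·A + M² + 2δ²M`. A real number satisfying `x² ≤ 2ax + c` lies below every `t ≥ a` with
`c ≤ t² − 2at`, and `t = (1 + 4δ)M` qualifies because `(1 + 4δ)(1 + 2δ)M² ≥ M² + 2δ²M` for `M ≥ 1`.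
-/

theorem le_of_sq_le_two_mul_add {x a c t : ℝ} (hx : x ^ 2 ≤ 2 * a * x + c) (hat : a ≤ t)
    (hct : c ≤ t ^ 2 - 2 * a * t) : x ≤ t := by
  by_contra! htx
  -- `y ↦ (y - a)² - a²` is strictly increasing on `[a, ∞)`
  nlinarith [mul_lt_mul'' (sub_lt_sub_right htx a) (sub_lt_sub_right htx a)
    (sub_nonneg.2 hat) (sub_nonneg.2 hat)]

/-- Deterministic core of Corollary 2.2: if `|A² − B²| ≤ δ(1 + B)(δ + A)` for
nonnegative reals `A, B, δ`, then `max(A, 1) ≤ (1 + 4δ) · max(B, 1)`. -/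
theorem stmt_0 (A B δ : ℝ) (hA : 0 ≤ A) (hB : 0 ≤ B) (hδ : 0 ≤ δ)
    (h : |A ^ 2 - B ^ 2| ≤ δ * (1 + B) * (δ + A)) :
    max A 1 ≤ (1 + 4 * δ) * max B 1 := by
  set M := max B 1
  have hM : 1 ≤ M := le_max_right B 1
  have hBM : B ≤ M := le_max_left B 1
  have hquad : A ^ 2 ≤ 2 * (δ * M) * A + (M ^ 2 + 2 * δ ^ 2 * M) := by
    have hB2 : B ^ 2 ≤ M ^ 2 := pow_le_pow_left₀ hB hBM 2
    have hδB : δ * (1 + B) ≤ δ * (2 * M) := by gcongr; linarith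
    calc A ^ 2 ≤ B ^ 2 + δ * (1 + B) * (δ + A) := by linarith [le_abs_self (A ^ 2 - B ^ 2)]
      _ ≤ M ^ 2 + δ * (2 * M) * (δ + A) := by gcongr
      _ = 2 * (δ * M) * A + (M ^ 2 + 2 * δ ^ 2 * M) := by ring
  refine max_le (le_of_sq_le_two_mul_add hquad ?_ ?_) ?_
  · nlinarith
  · nlinarith [mul_nonneg hδ (sub_nonneg.2 hM)]
  · nlinarith
end

section
/- Let A, B, δ be nonnegative real numbers satisfying |A² − B²| ≤ δ(1 + B)(δ + A). Then max(B, 1) ≤ (1 + 4·max(√δ, δ²)) · max(A, 1). -/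
/-! For `B > 1` the hypothesis gives `(B - A)(B + A) ≤ 2δB(δ + A)`, hence the additive bound
`B ≤ A + 2δ² + 2δA`. Both `δ` and `δ²` are at most `max(√δ, δ²)` (compare `δ` with `1`), so
the additive bound becomes the multiplicative one once `A` and the constants are bounded by
`max(A, 1) ≥ 1`. -/

namespace Real

lemma le_max_sqrt_sq {δ : ℝ} (hδ : 0 ≤ δ) : δ ≤ max (√δ) (δ ^ 2) := by
  rcases le_total δ 1 with hδ1 | hδ1
  · exact (le_sqrt_of_sq_le (by nlinarith)).trans (le_max_left _ _)
  · exact (by nlinarith : δ ≤ δ ^ 2).trans (le_max_right _ _)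

lemma sq_le_max_sqrt_sq {δ : ℝ} (hδ : 0 ≤ δ) : δ ^ 2 ≤ max (√δ) (δ ^ 2) := by
  rcases le_total δ 1 with hδ1 | hδ1
  · exact (by nlinarith : δ ^ 2 ≤ δ).trans (le_max_sqrt_sq hδ)
  · exact le_max_right _ _

end Real

lemma sub_le_of_sq_sub_sq_le_mul {a b k : ℝ} (ha : 0 ≤ a) (hb : 0 < b) (hk : 0 ≤ k)
    (h : b ^ 2 - a ^ 2 ≤ k * b) : b - a ≤ k := by
  rcases le_total b a with hba | hab
  · linarith
  · have : (b - a) * b ≤ k * b := by nlinarith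
    exact le_of_mul_le_mul_right this hb

lemma le_add_of_abs_sq_sub_sq_le {A B δ : ℝ} (hA : 0 ≤ A) (hδ : 0 ≤ δ) (hB : 1 ≤ B)
    (h : |A ^ 2 - B ^ 2| ≤ δ * (1 + B) * (δ + A)) : B ≤ A + 2 * δ * (δ + A) := by
  have hk : 0 ≤ 2 * δ * (δ + A) := by positivity
  have hsq : B ^ 2 - A ^ 2 ≤ 2 * δ * (δ + A) * B := by
    have : δ * (1 + B) * (δ + A) ≤ 2 * δ * (δ + A) * B := by nlinarith [mul_nonneg hδ hk]
    linarith [neg_abs_le (A ^ 2 - B ^ 2)]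
  linarith [sub_le_of_sq_sub_sq_le_mul hA (by linarith) hk hsq]

theorem stmt_1_general (A B δ : ℝ) (hA : 0 ≤ A) (hδ : 0 ≤ δ)
    (h : |A ^ 2 - B ^ 2| ≤ δ * (1 + B) * (δ + A)) :
    max B 1 ≤ (1 + 4 * max (Real.sqrt δ) (δ ^ 2)) * max A 1 := by
  set c := max (Real.sqrt δ) (δ ^ 2)
  have hc : 0 ≤ c := (Real.sqrt_nonneg δ).trans (le_max_left _ _)
  have hδc : δ ≤ c := Real.le_max_sqrt_sq hδ
  have hδ2c : δ ^ 2 ≤ c := Real.sq_le_max_sqrt_sq hδ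
  have hAM : A ≤ max A 1 := le_max_left _ _
  have hM : 1 ≤ max A 1 := le_max_right _ _
  rcases le_total B 1 with hB1 | hB1
  · rw [max_eq_right hB1]
    nlinarith
  · rw [max_eq_left hB1]
    calc B ≤ A + 2 * δ ^ 2 + 2 * (δ * A) := by
          linarith [le_add_of_abs_sq_sub_sq_le hA hδ hB1 h]
      _ ≤ max A 1 + 2 * (c * max A 1) + 2 * (c * max A 1) := by
          gcongr
          exact hδ2c.trans (le_mul_of_one_le_right hc hM)
      _ = (1 + 4 * c) * max A 1 := by ring

/-- Deterministic core of Corollary 2.2: if `|A² − B²| ≤ δ(1 + B)(δ + A)` for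
nonnegative reals `A, B, δ`, then `max(B, 1) ≤ (1 + 4·max(√δ, δ²)) · max(A, 1)`. -/
theorem stmt_1 (A B δ : ℝ) (hA : 0 ≤ A) (hB : 0 ≤ B) (hδ : 0 ≤ δ)
    (h : |A ^ 2 - B ^ 2| ≤ δ * (1 + B) * (δ + A)) :
    max B 1 ≤ (1 + 4 * max (Real.sqrt δ) (δ ^ 2)) * max A 1 :=
  stmt_1_general A B δ hA hδ h
end

section
/- Let A, B, δ be nonnegative real numbers satisfying |A² − B²| ≤ δ(1 + B)(δ + A), and assume in addition δ ≤ 1. Then (1/5)·max(A, 1) ≤ max(B, 1) ≤ 5·max(A, 1). -/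
/-!
Since `δ ≤ 1`, the right-hand side is at most `(1 + A)(1 + B) ≤ 4ab`, where
`a = max A 1` and `b = max B 1`; hence `b² ≤ a² + 4ab` and `a² ≤ b² + 4ab`.
The quadratic inequality `y² ≤ x² + 4xy` forces `y ≤ (2 + √5) x ≤ 5x`.
-/

lemma le_five_mul_of_sq_le_sq_add_four_mul_mul {x y : ℝ} (hx : 0 ≤ x)
    (h : y ^ 2 ≤ x ^ 2 + 4 * x * y) : y ≤ 5 * x := by
  by_contra! hlt
  nlinarith [mul_nonneg hx (by linarith : (0 : ℝ) ≤ y - x)]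

lemma abs_sq_sub_sq_le_four_mul_max_one {A B δ : ℝ} (hA : 0 ≤ A) (hδ : 0 ≤ δ)
    (hδ1 : δ ≤ 1) (h : |A ^ 2 - B ^ 2| ≤ δ * (1 + B) * (δ + A)) :
    |A ^ 2 - B ^ 2| ≤ 4 * max A 1 * max B 1 := by
  have hδA : δ * (δ + A) ≤ 1 + A := by nlinarith
  have hA' : 1 + A ≤ 2 * max A 1 := by linarith [le_max_left A 1, le_max_right A 1]
  have hB' : 1 + B ≤ 2 * max B 1 := by linarith [le_max_left B 1, le_max_right B 1]
  calc |A ^ 2 - B ^ 2| ≤ δ * (1 + B) * (δ + A) := h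
    _ = (1 + B) * (δ * (δ + A)) := by ring
    _ ≤ (2 * max B 1) * (δ * (δ + A)) := mul_le_mul_of_nonneg_right hB' (by positivity)
    _ ≤ (2 * max B 1) * (2 * max A 1) :=
      mul_le_mul_of_nonneg_left (hδA.trans hA') (by positivity)
    _ = 4 * max A 1 * max B 1 := by ring

lemma max_one_le_five_mul_max_one_of_abs_sq_sub_sq_le {A B : ℝ} (hA : 0 ≤ A)
    (h : |A ^ 2 - B ^ 2| ≤ 4 * max A 1 * max B 1) : max B 1 ≤ 5 * max A 1 := by
  have ha : 1 ≤ max A 1 := le_max_right A 1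
  have hsq : max B 1 ^ 2 ≤ max A 1 ^ 2 + 4 * max A 1 * max B 1 := by
    rcases le_total B 1 with hB1 | hB1
    · rw [max_eq_right hB1]
      nlinarith
    · have hAa : A ^ 2 ≤ max A 1 ^ 2 := pow_le_pow_left₀ hA (le_max_left A 1) 2
      rw [max_eq_left hB1] at h ⊢
      linarith [neg_abs_le (A ^ 2 - B ^ 2)]
  exact le_five_mul_of_sq_le_sq_add_four_mul_mul (by linarith) hsq

/-- Deterministic core of Corollary 2.2, two-sided form: if `|A² − B²| ≤ δ(1 + B)(δ + A)`
for nonnegative reals `A, B, δ` with `δ ≤ 1`, then `(1/5)·max(A,1) ≤ max(B,1) ≤ 5·max(A,1)`. -/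
theorem stmt_2 (A B δ : ℝ) (hA : 0 ≤ A) (hB : 0 ≤ B) (hδ : 0 ≤ δ) (hδ1 : δ ≤ 1)
    (h : |A ^ 2 - B ^ 2| ≤ δ * (1 + B) * (δ + A)) :
    (1 / 5) * max A 1 ≤ max B 1 ∧ max B 1 ≤ 5 * max A 1 := by
  have hab := abs_sq_sub_sq_le_four_mul_max_one hA hδ hδ1 h
  have hba : |B ^ 2 - A ^ 2| ≤ 4 * max B 1 * max A 1 := by
    rwa [abs_sub_comm, mul_right_comm]
  constructor
  · linarith [max_one_le_five_mul_max_one_of_abs_sq_sub_sq_le hB hba]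
  · exact max_one_le_five_mul_max_one_of_abs_sq_sub_sq_le hA hab
end

section
/- Let μ : ℕ → ℝ be a summable sequence with μ(i) ≥ 0 for all i, and for λ > 0 define the effective dimension N(λ) = ∑' i, μ(i)/(μ(i) + λ). Then for every q > 1 and every λ > 0 one has q⁻¹·max(N(λ), 1) < max(N(qλ), 1). -/
/-!
Termwise, `m / (m + λ) ≤ q · m / (m + qλ)` for `m ≥ 0` and `q ≥ 1` (this is the monotonicity of
`λ ↦ λ · N(λ)`), strictly when `m > 0`. Summing gives `N(λ) < q · N(qλ)` as soon as some
eigenvalue is positive; otherwise `N ≡ 0`, and the truncation at `1` makes the inequality strict.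
-/

noncomputable def effDim {ι : Type*} (μ : ι → ℝ) (lam : ℝ) : ℝ := ∑' i, μ i / (μ i + lam)

lemma summable_div_add {ι : Type*} {μ : ι → ℝ} (hsum : Summable μ) (hpos : ∀ i, 0 ≤ μ i)
    {lam : ℝ} (hlam : 0 < lam) : Summable fun i => μ i / (μ i + lam) :=
  (hsum.div_const lam).of_nonneg_of_le
    (fun i => div_nonneg (hpos i) (add_pos_of_nonneg_of_pos (hpos i) hlam).le)
    (fun i => div_le_div_of_nonneg_left (hpos i) hlam (le_add_of_nonneg_left (hpos i)))

lemma div_add_le_mul_div_add_mul {m lam q : ℝ} (hm : 0 ≤ m) (hlam : 0 < lam) (hq : 1 ≤ q) :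
    m / (m + lam) ≤ q * (m / (m + q * lam)) := by
  have hql : 0 < q * lam := by positivity
  rw [mul_div_assoc', div_le_div_iff₀ (by positivity) (by positivity)]
  nlinarith [mul_nonneg hm hm, mul_nonneg (mul_nonneg hm hm) (sub_nonneg.2 hq)]

lemma div_add_lt_mul_div_add_mul {m lam q : ℝ} (hm : 0 < m) (hlam : 0 < lam) (hq : 1 < q) :
    m / (m + lam) < q * (m / (m + q * lam)) := by
  have hql : 0 < q * lam := by positivity
  rw [mul_div_assoc', div_lt_div_iff₀ (by positivity) (by positivity)]
  nlinarith [mul_pos (mul_pos hm hm) (sub_pos.2 hq)]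

lemma effDim_lt_mul_effDim_mul {ι : Type*} {μ : ι → ℝ} (hsum : Summable μ)
    (hpos : ∀ i, 0 ≤ μ i) {i₀ : ι} (hi₀ : 0 < μ i₀) {q : ℝ} (hq : 1 < q) {lam : ℝ}
    (hlam : 0 < lam) : effDim μ lam < q * effDim μ (q * lam) := by
  have hql : 0 < q * lam := mul_pos (one_pos.trans hq) hlam
  rw [effDim, effDim, ← tsum_mul_left]
  exact Summable.tsum_lt_tsum (fun i => div_add_le_mul_div_add_mul (hpos i) hlam hq.le)
    (div_add_lt_mul_div_add_mul hi₀ hlam hq) (summable_div_add hsum hpos hlam)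
    ((summable_div_add hsum hpos hql).mul_left q)

/-- Key step toward the grid-regularity inequality (3.6): for the effective dimension
`N(λ) = ∑' i, μ(i)/(μ(i) + λ)` one has `q⁻¹·max(N(λ), 1) < max(N(qλ), 1)` for all
`q > 1` and `λ > 0`. -/
theorem stmt_8 (μ : ℕ → ℝ) (hsum : Summable μ) (hpos : ∀ i, 0 ≤ μ i) :
    ∀ q : ℝ, 1 < q → ∀ lam : ℝ, 0 < lam →
      q⁻¹ * max (∑' i, μ i / (μ i + lam)) 1 < max (∑' i, μ i / (μ i + q * lam)) 1 := by
  intro q hq lam hlam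
  change q⁻¹ * max (effDim μ lam) 1 < max (effDim μ (q * lam)) 1
  have hq₀ : 0 < q := one_pos.trans hq
  rw [inv_mul_lt_iff₀ hq₀]
  refine max_lt ?_ (hq.trans_le (le_mul_of_one_le_right hq₀.le (le_max_right _ _)))
  by_cases hμ : ∃ i, 0 < μ i
  · obtain ⟨i₀, hi₀⟩ := hμ
    exact (effDim_lt_mul_effDim_mul hsum hpos hi₀ hq hlam).trans_le
      (mul_le_mul_of_nonneg_left (le_max_left _ _) hq₀.le)
  · have hzero : μ = 0 := funext fun i => (hpos i).antisymm' (not_lt.1 fun h => hμ ⟨i, h⟩)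
    simpa [effDim, hzero] using
      mul_pos hq₀ (one_pos.trans_le (le_max_right (effDim μ (q * lam)) 1))
end

section
/- Let q > 1 and s ∈ [0, 1/2]. Let Ã, S̃ : (0, ∞) → ℝ be nonnegative functions such that Ã is nondecreasing, S̃ is nonincreasing, the map λ ↦ λ^s·S̃(λ) is nonincreasing, and S̃(λ) ≤ q·S̃(q·λ) for every λ > 0. Suppose there are 0 < λ⋆ < λ⋆⋆ ≤ q·λ⋆ with Ã(λ⋆) ≤ S̃(λ⋆) and S̃(λ⋆⋆) ≤ Ã(λ⋆⋆). Then for every λ > 0 one has λ⋆^s·S̃(λ⋆) ≤ q^{1−s}·λ^s·( Ã(λ) + S̃(λ) ). -/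
/-!
The point `λ⋆⋆` where `Ã` overtakes `S̃` already meets the oracle bound with constant one: for
`λ ≤ λ⋆⋆` compare the `S̃`-terms through the monotonicity of `λ ↦ λ^s S̃(λ)`, for `λ > λ⋆⋆` the
`Ã`-terms. Stepping back from `λ⋆⋆` to `λ⋆` costs only the factor `q^{1-s}`, by
`S̃(λ⋆) ≤ q S̃(qλ⋆)` and `λ⋆⋆ ≤ qλ⋆`.
-/

open Set

theorem rpow_mul_le_rpow_one_sub_mul_of_le_mul {q s x y : ℝ} {S : ℝ → ℝ} (hq : 0 < q)
    (hx : 0 < x) (hy : 0 < y) (hyx : y ≤ q * x) (hSx : S x ≤ q * S (q * x))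
    (hanti : AntitoneOn (fun t : ℝ => t ^ s * S t) (Ioi 0)) :
    x ^ s * S x ≤ q ^ (1 - s) * (y ^ s * S y) := by
  have hscale : x ^ s * (q * S (q * x)) = q ^ (1 - s) * ((q * x) ^ s * S (q * x)) := by
    rw [Real.mul_rpow hq.le hx.le, Real.rpow_sub hq, Real.rpow_one]
    field_simp
  calc x ^ s * S x ≤ x ^ s * (q * S (q * x)) := by gcongr
    _ = q ^ (1 - s) * ((q * x) ^ s * S (q * x)) := hscale
    _ ≤ q ^ (1 - s) * (y ^ s * S y) :=
      mul_le_mul_of_nonneg_left (hanti hy (mul_pos hq hx) hyx) (by positivity)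

theorem rpow_mul_le_rpow_mul_add_of_le {s y t : ℝ} {A S : ℝ → ℝ} (hs : 0 ≤ s)
    (hAt : 0 ≤ A t) (hSt : 0 ≤ S t) (hA : MonotoneOn A (Ioi 0))
    (hanti : AntitoneOn (fun t : ℝ => t ^ s * S t) (Ioi 0))
    (hy : 0 < y) (hSA : S y ≤ A y) (ht : 0 < t) :
    y ^ s * S y ≤ t ^ s * (A t + S t) := by
  rcases le_or_gt t y with hty | hyt
  · calc y ^ s * S y ≤ t ^ s * S t := hanti ht hy hty
      _ ≤ t ^ s * (A t + S t) := by gcongr; linarith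
  · calc y ^ s * S y ≤ y ^ s * A t := by gcongr; exact hSA.trans (hA hy ht hyt.le)
      _ ≤ t ^ s * A t := by gcongr
      _ ≤ t ^ s * (A t + S t) := by gcongr; linarith

theorem stmt_12_general (q s : ℝ) (hq : 1 < q) (hs : s ∈ Set.Icc (0 : ℝ) (1 / 2))
    (A S : ℝ → ℝ)
    (hA0 : ∀ lam > (0 : ℝ), 0 ≤ A lam) (hS0 : ∀ lam > (0 : ℝ), 0 ≤ S lam)
    (hAmono : MonotoneOn A (Set.Ioi 0))
    (hlamS : AntitoneOn (fun lam : ℝ => lam ^ s * S lam) (Set.Ioi 0))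
    (hSq : ∀ lam > (0 : ℝ), S lam ≤ q * S (q * lam))
    (lamstar lamss : ℝ) (h0 : 0 < lamstar) (h1 : lamstar < lamss) (h2 : lamss ≤ q * lamstar)
    (h4 : S lamss ≤ A lamss) :
    ∀ lam > (0 : ℝ), lamstar ^ s * S lamstar ≤ q ^ (1 - s) * (lam ^ s * (A lam + S lam)) := by
  intro lam hlam
  have hlamss : 0 < lamss := h0.trans h1
  calc lamstar ^ s * S lamstar ≤ q ^ (1 - s) * (lamss ^ s * S lamss) :=
        rpow_mul_le_rpow_one_sub_mul_of_le_mul (zero_lt_one.trans hq) h0 hlamss h2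
          (hSq lamstar h0) hlamS
    _ ≤ q ^ (1 - s) * (lam ^ s * (A lam + S lam)) :=
      mul_le_mul_of_nonneg_left
        (rpow_mul_le_rpow_mul_add_of_le hs.1 (hA0 lam hlam) (hS0 lam hlam) hAmono hlamS hlamss h4
          hlam) (by positivity)

/-- Deterministic content of Lemma 3.8 (oracle inequality for the balancing principle):
if `Ã` is nondecreasing and `S̃` nonincreasing on `(0,∞)`, both nonnegative, with
`λ ↦ λ^s·S̃(λ)` nonincreasing and `S̃(λ) ≤ q·S̃(qλ)`, and `λ⋆ < λ⋆⋆ ≤ qλ⋆` satisfy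
`Ã(λ⋆) ≤ S̃(λ⋆)` and `S̃(λ⋆⋆) ≤ Ã(λ⋆⋆)`, then
`λ⋆^s·S̃(λ⋆) ≤ q^{1−s}·λ^s·(Ã(λ) + S̃(λ))` for every `λ > 0`. -/
theorem stmt_12 (q s : ℝ) (hq : 1 < q) (hs : s ∈ Set.Icc (0 : ℝ) (1 / 2))
    (A S : ℝ → ℝ)
    (hA0 : ∀ lam > (0 : ℝ), 0 ≤ A lam) (hS0 : ∀ lam > (0 : ℝ), 0 ≤ S lam)
    (hAmono : MonotoneOn A (Set.Ioi 0)) (hSanti : AntitoneOn S (Set.Ioi 0))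
    (hlamS : AntitoneOn (fun lam : ℝ => lam ^ s * S lam) (Set.Ioi 0))
    (hSq : ∀ lam > (0 : ℝ), S lam ≤ q * S (q * lam))
    (lamstar lamss : ℝ) (h0 : 0 < lamstar) (h1 : lamstar < lamss) (h2 : lamss ≤ q * lamstar)
    (h3 : A lamstar ≤ S lamstar) (h4 : S lamss ≤ A lamss) :
    ∀ lam > (0 : ℝ), lamstar ^ s * S lamstar ≤ q ^ (1 - s) * (lam ^ s * (A lam + S lam)) :=
  stmt_12_general q s hq hs A S hA0 hS0 hAmono hlamS hSq lamstar lamss h0 h1 h2 h4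
end
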